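/- arXiv:2206.11034 — 2 statements merged into one kernel-verified Lean document; each statement's English description precedes it below -/
import Mathlib

section
/- Let Γ* : G → ℝ² be a minimal network and let Γ : G → ℝ² be a map on the same underlying graph G whose restriction to each edge [0,1]×{i} is a Lipschitz map with almost everywhere non-vanishing derivative, such that every junction of G has order 3 and Γ(q) = Γ*(q) for every endpoint q of G. Then L(Γ*) ≤ L(Γ), where L(Γ) is the sum of the lengths (total variations) of the edge maps. -/
open Set

noncomputable section

/-- The Euclidean plane `ℝ²`. -/
abbrev Plane : Type := EuclideanSpace ℝ (Fin 2)

/-- A topological graph on `N` edges: the quotient of `E = ⊔_{i=1}^N [0,1] × {i}` by an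
equivalence relation that only identifies points of `V = ⊔_{i=1}^N {0,1} × {i}`, required
to be connected. -/
structure TopGraph (N : ℕ) where
  rel : Setoid (unitInterval × Fin N)
  rel_vertices : ∀ x y : unitInterval × Fin N, rel.r x y → x = y ∨
    ((x.1 = 0 ∨ x.1 = 1) ∧ (y.1 = 0 ∨ y.1 = 1))
  connected : ConnectedSpace (Quotient rel)

namespace TopGraph

variable {N : ℕ}

/-- The underlying topological space of the graph. -/
abbrev space (G : TopGraph N) : Type := Quotient G.rel

/-- The canonical projection from the disjoint union of edges onto the graph. -/
def proj (G : TopGraph N) (x : unitInterval × Fin N) : G.space := Quotient.mk G.rel x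

/-- The preimage (fiber) of a point of the graph under the projection. -/
def fiber (G : TopGraph N) (p : G.space) : Set (unitInterval × Fin N) := {x | G.proj x = p}

/-- A point of `E` lying in `V`, i.e. an endpoint label of some edge. -/
def IsVertexPoint (x : unitInterval × Fin N) : Prop := x.1 = 0 ∨ x.1 = 1

/-- An endpoint of the graph: a point whose preimage lies in `V` and is a singleton. -/
def IsEndpoint (G : TopGraph N) (p : G.space) : Prop :=
  (∀ x ∈ G.fiber p, IsVertexPoint x) ∧ (G.fiber p).ncard = 1

/-- A junction of the graph: a point whose preimage lies in `V` and has at least two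
elements. -/
def IsJunction (G : TopGraph N) (p : G.space) : Prop :=
  (∀ x ∈ G.fiber p, IsVertexPoint x) ∧ 2 ≤ (G.fiber p).ncard

/-- The order of a junction: the cardinality of its preimage. -/
def order (G : TopGraph N) (p : G.space) : ℕ := (G.fiber p).ncard

/-- A subgraph of `G`: a subspace consisting of (the image in `G` of) a subset of whole
edges, with the identifications induced by `G`. -/
def IsSubgraph (G : TopGraph N) (S : Set G.space) : Prop :=
  ∃ E' : Set (Fin N), S = G.proj '' {x | x.2 ∈ E'}

end TopGraph

/-- A (C¹ immersed) network: a continuous map `Γ : G → ℝ²` whose restriction to each edge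
`[0,1] × {i}` is a C¹ immersion (recorded via a map `edge i : ℝ → ℝ²` which agrees with
`Γ` on the edge, is C¹ on `[0,1]` and has nonvanishing derivative there). -/
structure Network (N : ℕ) (G : TopGraph N) where
  toFun : G.space → Plane
  continuous_toFun : Continuous toFun
  edge : Fin N → ℝ → Plane
  edge_eq : ∀ (i : Fin N) (t : unitInterval), edge i (t : ℝ) = toFun (G.proj (t, i))
  edge_smooth : ∀ i, ContDiffOn ℝ 1 (edge i) (Icc (0:ℝ) 1)
  edge_immersed : ∀ i, ∀ t ∈ Icc (0:ℝ) 1, derivWithin (edge i) (Icc (0:ℝ) 1) t ≠ 0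

namespace Network

variable {N : ℕ} {G : TopGraph N}

/-- The length of a network: the sum of the lengths (total variations) of its edge maps. -/
def length (Γ : Network N G) : ℝ :=
  ∑ i : Fin N, (eVariationOn (Γ.edge i) (Icc (0:ℝ) 1)).toReal

/-- The inner tangent vector of the edge `x.2` at the endpoint label `x.1 ∈ {0,1}`:
`(-1)^e γ'(e)/|γ'(e)|`. -/
def innerTangent (Γ : Network N G) (x : unitInterval × Fin N) : Plane :=
  if (x.1 : ℝ) = 0 then
    ‖derivWithin (Γ.edge x.2) (Icc (0:ℝ) 1) 0‖⁻¹ • derivWithin (Γ.edge x.2) (Icc (0:ℝ) 1) 0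
  else
    -(‖derivWithin (Γ.edge x.2) (Icc (0:ℝ) 1) 1‖⁻¹ • derivWithin (Γ.edge x.2) (Icc (0:ℝ) 1) 1)

/-- A minimal network: every edge is an embedding parametrizing a nondegenerate straight
segment, distinct edges intersect only at identified endpoints, the two endpoint labels
of each edge are not identified with each other, every junction has order `3`, and at
every junction the inner tangent vectors sum to zero. -/
structure IsMinimal (Γ : Network N G) : Prop where
  straight : ∀ i, ∃ p q : Plane, p ≠ q ∧ Γ.edge i '' (Icc (0:ℝ) 1) = segment ℝ p q
  embed : ∀ i, Set.InjOn (Γ.edge i) (Icc (0:ℝ) 1)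
  intersect_only_at_identified_endpoints : ∀ i j, i ≠ j → ∀ s t : unitInterval,
    Γ.edge i (s : ℝ) = Γ.edge j (t : ℝ) → G.proj (s, i) = G.proj (t, j)
  ends_distinct : ∀ i, G.proj (0, i) ≠ G.proj (1, i)
  junctions_order_three : ∀ p, G.IsJunction p → G.order p = 3
  balanced : ∀ p, G.IsJunction p → (∑ᶠ x ∈ G.fiber p, Γ.innerTangent x) = 0

end Network

/-- A Lipschitz network: a continuous map `Γ : G → ℝ²` whose restriction to each edge is a
Lipschitz map with almost everywhere non-vanishing derivative. -/
structure LipNetwork (N : ℕ) (G : TopGraph N) where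
  toFun : G.space → Plane
  continuous_toFun : Continuous toFun
  edge : Fin N → ℝ → Plane
  edge_eq : ∀ (i : Fin N) (t : unitInterval), edge i (t : ℝ) = toFun (G.proj (t, i))
  edge_lipschitz : ∀ i, ∃ K : NNReal, LipschitzOnWith K (edge i) (Icc (0:ℝ) 1)
  edge_deriv_ne : ∀ i, ∀ᵐ t ∂(MeasureTheory.volume.restrict (Icc (0:ℝ) 1)),
    derivWithin (edge i) (Icc (0:ℝ) 1) t ≠ 0

/-- The length of a Lipschitz network: the sum of the lengths (total variations) of its
edge maps. -/
def LipNetwork.length {N : ℕ} {G : TopGraph N} (Γ : LipNetwork N G) : ℝ :=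
  ∑ i : Fin N, (eVariationOn (Γ.edge i) (Icc (0:ℝ) 1)).toReal

/-!
A calibration argument. Each edge of the minimal network `Γ*` is a segment traversed
monotonically, so its length is `⟪νᵢ, Γ*(1,i) - Γ*(0,i)⟫`, where `νᵢ` is its inner tangent at
`0`, and its inner tangent at `1` is `-νᵢ`. Replacing `Γ*` by `Γ` changes
`∑ᵢ ⟪νᵢ, Γ(1,i) - Γ(0,i)⟫` by a sum over the vertices `p` of
`⟪∑ inner tangents at p, (Γ - Γ*)(p)⟫`, which vanishes: the tangents balance at junctions and
`Γ = Γ*` at endpoints. Finally `⟪νᵢ, Γ(1,i) - Γ(0,i)⟫ ≤ ‖Γ(1,i) - Γ(0,i)‖`, which is at most the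
length of the `i`-th edge of `Γ`.
-/

open AffineMap
open scoped RealInnerProductSpace

section Segment

variable {E : Type*} [AddCommGroup E] [Module ℝ E]

theorem exists_sub_eq_smul_sub_of_mem_segment {p q x y z : E} (hx : x ∈ segment ℝ p q)
    (hy : y ∈ segment ℝ p q) (hz : z ∈ segment ℝ p q) (hxy : x ≠ y) :
    ∃ r : ℝ, z - x = r • (y - x) := by
  rw [segment_eq_image'] at hx hy hz
  obtain ⟨θx, -, rfl⟩ := hx
  obtain ⟨θy, -, rfl⟩ := hy
  obtain ⟨θz, -, rfl⟩ := hz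
  have hθ : θy - θx ≠ 0 := by
    intro h
    apply hxy
    rw [sub_eq_zero.1 h]
  refine ⟨(θz - θx) / (θy - θx), ?_⟩
  rw [add_sub_add_left_eq_sub, add_sub_add_left_eq_sub, ← sub_smul, ← sub_smul, smul_smul,
    div_mul_cancel₀ _ hθ]

end Segment

section NormedSpace

variable {E : Type*} [NormedAddCommGroup E] [NormedSpace ℝ E]

theorem eVariationOn_eq_edist_of_eq_lineMap {f : ℝ → E} {h : ℝ → ℝ} {a b : ℝ} (hab : a ≤ b)
    (hmono : MonotoneOn h (Icc a b)) (ha : h a = 0) (hb : h b = 1)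
    (hf : ∀ t ∈ Icc a b, f t = lineMap (f a) (f b) (h t)) :
    eVariationOn f (Icc a b) = edist (f a) (f b) := by
  refine le_antisymm ?_ (edist_comm (f a) (f b) ▸
    eVariationOn.edist_le f (right_mem_Icc.2 hab) (left_mem_Icc.2 hab))
  calc eVariationOn f (Icc a b)
      = eVariationOn (lineMap (f a) (f b) ∘ h) (Icc a b) := eVariationOn.eq_of_eqOn hf
    _ ≤ nndist (f a) (f b) * eVariationOn h (Icc a b) :=
        (lipschitzWith_lineMap (f a) (f b)).lipschitzOnWith.comp_eVariationOn_le
          (mapsTo_univ _ _)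
    _ = edist (f a) (f b) := by
        have := hmono.eVariationOn_eq (left_mem_Icc.2 hab) (right_mem_Icc.2 hab)
        rw [inter_self, ha, hb] at this
        rw [this, sub_zero, ENNReal.ofReal_one, mul_one, edist_nndist]

end NormedSpace

section InnerProductSpace

variable {E : Type*} [NormedAddCommGroup E] [InnerProductSpace ℝ E]

theorem exists_monotoneOn_eq_lineMap_of_mapsTo_segment {f : ℝ → E} {a b : ℝ} {p q : E}
    (hab : a < b) (hf : ContinuousOn f (Icc a b)) (hinj : InjOn f (Icc a b))
    (hseg : MapsTo f (Icc a b) (segment ℝ p q)) :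
    ∃ h : ℝ → ℝ, MonotoneOn h (Icc a b) ∧ h a = 0 ∧ h b = 1 ∧
      ∀ t ∈ Icc a b, f t = lineMap (f a) (f b) (h t) := by
  have ha : a ∈ Icc a b := left_mem_Icc.2 hab.le
  have hb : b ∈ Icc a b := right_mem_Icc.2 hab.le
  set u := f b - f a with hu_def
  have hu : u ≠ 0 := sub_ne_zero.2 fun h ↦ hab.ne' (hinj hb ha h)
  set h : ℝ → ℝ := fun t ↦ ⟪u, f t - f a⟫ / ‖u‖ ^ 2
  have hline : ∀ t ∈ Icc a b, f t = lineMap (f a) (f b) (h t) := by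
    intro t ht
    obtain ⟨r, hr⟩ := exists_sub_eq_smul_sub_of_mem_segment (hseg ha) (hseg hb) (hseg ht)
      (fun h ↦ hab.ne (hinj ha hb h))
    rw [← hu_def] at hr
    have hht : h t = r := by
      simp only [h, hr, real_inner_smul_right, real_inner_self_eq_norm_sq]
      field_simp [norm_ne_zero_iff.2 hu]
    rw [lineMap_apply_module', hht, ← hr, sub_add_cancel]
  have h0 : h a = 0 := by simp [h]
  have h1 : h b = 1 := by
    simp only [h, u, real_inner_self_eq_norm_sq]
    exact div_self (pow_ne_zero 2 (norm_ne_zero_iff.2 hu))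
  have hcont : ContinuousOn h (Icc a b) := by fun_prop
  have hinj' : InjOn h (Icc a b) := fun s hs t ht hst ↦
    hinj hs ht (by rw [hline s hs, hline t ht, hst])
  refine ⟨h, ?_, h0, h1, hline⟩
  rcases hcont.strictMonoOn_of_injOn_Icc' hab.le hinj' with hmono | hanti
  · exact hmono.monotoneOn
  · have := hanti ha hb hab
    rw [h0, h1] at this
    exact absurd this (by norm_num)

theorem HasDerivWithinAt.inv_norm_smul_eq_of_eq_lineMap {f : ℝ → E} {f' x y : E} {h : ℝ → ℝ}
    {s : Set ℝ} {t : ℝ} (hf : HasDerivWithinAt f f' s t) (hs : UniqueDiffWithinAt ℝ s t)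
    (ht : t ∈ s) (hmono : MonotoneOn h s) (hline : ∀ r ∈ s, f r = lineMap x y (h r))
    (hf' : f' ≠ 0) : ‖f'‖⁻¹ • f' = ‖y - x‖⁻¹ • (y - x) := by
  set u := y - x
  have hline' : ∀ r ∈ s, f r = x + h r • u := fun r hr ↦ by
    rw [hline r hr, lineMap_apply_module', add_comm]
  have hu : u ≠ 0 := by
    rintro hu
    have hconst : EqOn f (fun _ ↦ x) s := fun r hr ↦ by rw [hline' r hr, hu, smul_zero, add_zero]
    exact hf' (hs.eq_deriv s hf ((hasDerivWithinAt_const t s x).congr_of_mem hconst ht))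
  have hφ : HasDerivWithinAt (fun r ↦ ⟪u, f r - x⟫) ⟪u, f'⟫ s t := by
    simpa using (hasDerivWithinAt_const t s u).inner ℝ (hf.sub_const x)
  have hh : HasDerivWithinAt h (⟪u, f'⟫ / ‖u‖ ^ 2) s t := by
    refine (hφ.div_const _).congr_of_mem (fun r hr ↦ ?_) ht
    simp only [hline' r hr, add_sub_cancel_left, real_inner_smul_right,
      real_inner_self_eq_norm_sq]
    field_simp [norm_ne_zero_iff.2 hu]
  have hf'_eq : f' = (⟪u, f'⟫ / ‖u‖ ^ 2) • u :=
    hs.eq_deriv s hf (((hh.smul_const u).const_add x).congr_of_mem hline' ht)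
  have hpos : 0 < ⟪u, f'⟫ / ‖u‖ ^ 2 := by
    refine lt_of_le_of_ne ?_ fun h0 ↦ hf' (by rw [hf'_eq, ← h0, zero_smul])
    exact hh.derivWithin hs ▸ hmono.derivWithin_nonneg
  rw [hf'_eq, norm_smul, Real.norm_of_nonneg hpos.le, smul_smul, mul_comm _ ‖u‖, mul_inv,
    inv_mul_cancel_right₀ hpos.ne']

end InnerProductSpace

namespace TopGraph

variable {N : ℕ}

def vertexPoints : Finset (unitInterval × Fin N) := {0, 1} ×ˢ Finset.univ

theorem mem_vertexPoints {x : unitInterval × Fin N} : x ∈ vertexPoints ↔ IsVertexPoint x := by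
  simp [vertexPoints, IsVertexPoint]

theorem IsVertexPoint.of_proj_eq (G : TopGraph N) {x y : unitInterval × Fin N}
    (hx : IsVertexPoint x) (hxy : G.proj y = G.proj x) : IsVertexPoint y := by
  rcases G.rel_vertices y x (Quotient.exact hxy) with rfl | ⟨hy, -⟩
  exacts [hx, hy]

/-- Each class of identified endpoint labels is either a junction, where `τ` is balanced, or an
endpoint, where `D` vanishes. -/
theorem sum_inner_vertexPoints_eq_zero {E : Type*} [NormedAddCommGroup E]
    [InnerProductSpace ℝ E] (G : TopGraph N) (τ : unitInterval × Fin N → E) (D : G.space → E)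
    (hτ : ∀ p, G.IsJunction p → ∑ᶠ x ∈ G.fiber p, τ x = 0)
    (hD : ∀ q, G.IsEndpoint q → D q = 0) :
    ∑ x ∈ vertexPoints, ⟪τ x, D (G.proj x)⟫ = 0 := by
  classical
  rw [← Finset.sum_fiberwise_of_maps_to (t := vertexPoints.image G.proj)
    fun x hx ↦ Finset.mem_image_of_mem _ hx]
  refine Finset.sum_eq_zero fun p hp ↦ ?_
  obtain ⟨x, hx, rfl⟩ := Finset.mem_image.1 hp
  have hfib : G.fiber (G.proj x) = ↑{y ∈ vertexPoints | G.proj y = G.proj x} := by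
    ext y
    simp only [fiber, mem_ofPred_eq, Finset.coe_filter, mem_vertexPoints]
    exact ⟨fun hy ↦ ⟨(mem_vertexPoints.1 hx).of_proj_eq G hy, hy⟩, And.right⟩
  have hvert : ∀ y ∈ G.fiber (G.proj x), IsVertexPoint y := fun y hy ↦ by
    rw [hfib] at hy
    exact mem_vertexPoints.1 (Finset.mem_filter.1 hy).1
  rw [Finset.sum_congr rfl fun y hy ↦ by rw [(Finset.mem_filter.1 hy).2], ← sum_inner]
  rcases le_or_gt 2 (G.fiber (G.proj x)).ncard with h2 | h2
  · rw [← finsum_mem_coe_finset, ← hfib, hτ _ ⟨hvert, h2⟩, inner_zero_left]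
  · have hpos : 0 < (G.fiber (G.proj x)).ncard := by
      rw [hfib, ncard_coe_finset, Finset.card_pos]
      exact ⟨x, Finset.mem_filter.2 ⟨hx, rfl⟩⟩
    rw [hD _ ⟨hvert, by omega⟩, inner_zero_right]

end TopGraph

namespace Network

variable {N : ℕ} {G : TopGraph N}

theorem edge_one_sub_edge_zero (Γ : Network N G) (i : Fin N) :
    Γ.edge i 1 - Γ.edge i 0 = Γ.toFun (G.proj (1, i)) - Γ.toFun (G.proj (0, i)) :=
  congrArg₂ (· - ·) (Γ.edge_eq i 1) (Γ.edge_eq i 0)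

theorem norm_innerTangent_le_one (Γ : Network N G) (x : unitInterval × Fin N) :
    ‖Γ.innerTangent x‖ ≤ 1 := by
  have key : ∀ v : Plane, ‖‖v‖⁻¹ • v‖ ≤ 1 := fun v ↦ by
    rw [norm_smul, norm_inv, norm_norm]
    exact inv_mul_le_one_of_le₀ le_rfl (norm_nonneg v)
  unfold innerTangent
  split_ifs
  · exact key _
  · rw [norm_neg]
    exact key _

namespace IsMinimal

variable {Γ : Network N G}

theorem exists_edge_eq_lineMap (hmin : Γ.IsMinimal) (i : Fin N) :
    ∃ h : ℝ → ℝ, MonotoneOn h (Icc 0 1) ∧ h 0 = 0 ∧ h 1 = 1 ∧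
    ∀ t ∈ Icc (0 : ℝ) 1, Γ.edge i t = lineMap (Γ.edge i 0) (Γ.edge i 1) (h t) := by
  obtain ⟨p, q, -, himg⟩ := hmin.straight i
  exact exists_monotoneOn_eq_lineMap_of_mapsTo_segment one_pos (Γ.edge_smooth i).continuousOn
    (hmin.embed i) (himg ▸ mapsTo_image _ _)

theorem eVariationOn_edge (hmin : Γ.IsMinimal) (i : Fin N) :
    eVariationOn (Γ.edge i) (Icc 0 1) = edist (Γ.edge i 0) (Γ.edge i 1) := by
  obtain ⟨h, hmono, h0, h1, hline⟩ := hmin.exists_edge_eq_lineMap i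
  exact eVariationOn_eq_edist_of_eq_lineMap zero_le_one hmono h0 h1 hline

theorem inv_norm_smul_derivWithin_edge (hmin : Γ.IsMinimal) (i : Fin N) {t : ℝ}
    (ht : t ∈ Icc (0 : ℝ) 1) :
    ‖derivWithin (Γ.edge i) (Icc 0 1) t‖⁻¹ • derivWithin (Γ.edge i) (Icc 0 1) t =
      ‖Γ.edge i 1 - Γ.edge i 0‖⁻¹ • (Γ.edge i 1 - Γ.edge i 0) := by
  obtain ⟨h, hmono, -, -, hline⟩ := hmin.exists_edge_eq_lineMap i
  exact ((Γ.edge_smooth i).differentiableOn one_ne_zero t ht).hasDerivWithinAt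
    |>.inv_norm_smul_eq_of_eq_lineMap (uniqueDiffOn_Icc one_pos t ht) ht hmono hline
      (Γ.edge_immersed i t ht)

theorem innerTangent_zero (hmin : Γ.IsMinimal) (i : Fin N) :
    Γ.innerTangent (0, i) = ‖Γ.edge i 1 - Γ.edge i 0‖⁻¹ • (Γ.edge i 1 - Γ.edge i 0) := by
  simpa [innerTangent] using hmin.inv_norm_smul_derivWithin_edge i (left_mem_Icc.2 zero_le_one)

theorem innerTangent_one (hmin : Γ.IsMinimal) (i : Fin N) :
    Γ.innerTangent (1, i) = -Γ.innerTangent (0, i) := by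
  rw [hmin.innerTangent_zero, ← hmin.inv_norm_smul_derivWithin_edge i
    (right_mem_Icc.2 zero_le_one)]
  simp [innerTangent]

theorem toReal_eVariationOn_edge (hmin : Γ.IsMinimal) (i : Fin N) :
    (eVariationOn (Γ.edge i) (Icc 0 1)).toReal =
      ⟪Γ.innerTangent (0, i), Γ.edge i 1 - Γ.edge i 0⟫ := by
  rw [hmin.eVariationOn_edge, edist_dist, ENNReal.toReal_ofReal dist_nonneg,
    hmin.innerTangent_zero, real_inner_smul_left, real_inner_self_eq_norm_sq, dist_eq_norm',
    sq, ← mul_assoc, inv_mul_mul_self]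

theorem sum_inner_innerTangent_eq_of_endpoints (hmin : Γ.IsMinimal) {F F' : G.space → Plane}
    (hFF' : ∀ q, G.IsEndpoint q → F q = F' q) :
    ∑ i, ⟪Γ.innerTangent (0, i), F (G.proj (1, i)) - F (G.proj (0, i))⟫ =
      ∑ i, ⟪Γ.innerTangent (0, i), F' (G.proj (1, i)) - F' (G.proj (0, i))⟫ := by
  have h := G.sum_inner_vertexPoints_eq_zero Γ.innerTangent (F - F') hmin.balanced
    fun q hq ↦ sub_eq_zero.2 (hFF' q hq)
  rw [TopGraph.vertexPoints, Finset.sum_product, Finset.sum_pair (by simp)] at h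
  simp only [hmin.innerTangent_one, inner_neg_left, Pi.sub_apply, inner_sub_right,
    Finset.sum_neg_distrib, Finset.sum_sub_distrib] at h
  simp only [inner_sub_right, Finset.sum_sub_distrib]
  linarith

end IsMinimal

end Network

namespace LipNetwork

variable {N : ℕ} {G : TopGraph N}

theorem edge_one_sub_edge_zero (Γ : LipNetwork N G) (i : Fin N) :
    Γ.edge i 1 - Γ.edge i 0 = Γ.toFun (G.proj (1, i)) - Γ.toFun (G.proj (0, i)) :=
  congrArg₂ (· - ·) (Γ.edge_eq i 1) (Γ.edge_eq i 0)

theorem dist_edge_le (Γ : LipNetwork N G) (i : Fin N) :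
    dist (Γ.edge i 0) (Γ.edge i 1) ≤ (eVariationOn (Γ.edge i) (Icc 0 1)).toReal := by
  obtain ⟨K, hK⟩ := Γ.edge_lipschitz i
  have hbv : BoundedVariationOn (Γ.edge i) (Icc 0 1) := by
    simpa using hK.locallyBoundedVariationOn 0 1 (left_mem_Icc.2 zero_le_one)
      (right_mem_Icc.2 zero_le_one)
  exact hbv.dist_le (left_mem_Icc.2 zero_le_one) (right_mem_Icc.2 zero_le_one)

end LipNetwork

theorem minimal_network_length_le_lipschitz_same_graph_general {N : ℕ} {G : TopGraph N}
    (Γstar : Network N G) (hmin : Γstar.IsMinimal)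
    (Γ : LipNetwork N G)
    (hend : ∀ q, G.IsEndpoint q → Γ.toFun q = Γstar.toFun q) :
    Γstar.length ≤ Γ.length :=
  calc Γstar.length = ∑ i, ⟪Γstar.innerTangent (0, i), Γstar.edge i 1 - Γstar.edge i 0⟫ :=
        Finset.sum_congr rfl fun i _ ↦ hmin.toReal_eVariationOn_edge i
    _ = ∑ i, ⟪Γstar.innerTangent (0, i), Γ.edge i 1 - Γ.edge i 0⟫ := by
        simpa only [Network.edge_one_sub_edge_zero, LipNetwork.edge_one_sub_edge_zero] using
          (hmin.sum_inner_innerTangent_eq_of_endpoints hend).symm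
    _ ≤ ∑ i, dist (Γ.edge i 0) (Γ.edge i 1) := Finset.sum_le_sum fun i _ ↦ by
        rw [dist_eq_norm']
        exact (real_inner_le_norm _ _).trans
          (mul_le_of_le_one_left (norm_nonneg _) (Γstar.norm_innerTangent_le_one _))
    _ ≤ Γ.length := Finset.sum_le_sum fun i _ ↦ Γ.dist_edge_le i

/-- A minimal network minimizes length among Lipschitz networks with the
same underlying graph (all of whose junctions have order `3`) and the same endpoints. -/
theorem minimal_network_length_le_lipschitz_same_graph {N : ℕ} {G : TopGraph N}
    (Γstar : Network N G) (hmin : Γstar.IsMinimal)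
    (Γ : LipNetwork N G)
    (htriple : ∀ p, G.IsJunction p → G.order p = 3)
    (hend : ∀ q, G.IsEndpoint q → Γ.toFun q = Γstar.toFun q) :
    Γstar.length ≤ Γ.length :=
  minimal_network_length_le_lipschitz_same_graph_general Γstar hmin Γ hend
end
end

section
/- There is no minimal network Γ : G → ℝ² having exactly two endpoints and at least one junction. Equivalently, every minimal network with exactly two endpoints consists of a single straight segment. -/
open Set

noncomputable section

/-!
An edge of a minimal network is a straight segment, and its inner tangent at either end points
along the edge. So if a nonzero linear functional `f` attains its maximum over the vertices at a
junction, `f` is nonpositive on the three inner tangents there; since they sum to zero, all three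
lie in the line `ker f`, and three unit vectors on a line cannot sum to zero. Hence `f` attains its
maximum (and likewise its minimum) over the vertices only at endpoints. Taking `f` to vanish on the
difference of the two endpoints makes `f` constant on the vertices, so a junction would be a maximum.
-/

open Module

theorem derivWithin_mul_sub_pos_of_injOn {g : ℝ → ℝ} {a b t : ℝ} (hab : a < b)
    (hc : ContinuousOn g (Icc a b)) (hinj : InjOn g (Icc a b))
    (hg' : derivWithin g (Icc a b) t ≠ 0) :
    0 < derivWithin g (Icc a b) t * (g b - g a) := by
  have ha : a ∈ Icc a b := left_mem_Icc.2 hab.le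
  have hb : b ∈ Icc a b := right_mem_Icc.2 hab.le
  rcases hc.strictMonoOn_of_injOn_Icc' hab.le hinj with hmono | hanti
  · exact mul_pos (hmono.monotoneOn.derivWithin_nonneg.lt_of_ne' hg')
      (sub_pos.2 (hmono ha hb hab))
  · exact mul_pos_of_neg_of_neg (hanti.antitoneOn.derivWithin_nonpos.lt_of_ne hg')
      (sub_neg.2 (hanti ha hb hab))

theorem exists_pos_derivWithin_eq_smul_sub_of_injOn {E : Type*} [NormedAddCommGroup E]
    [NormedSpace ℝ E] {γ : ℝ → E} {a b t : ℝ} {p u : E} (hab : a < b)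
    (hγ : DifferentiableOn ℝ γ (Icc a b)) (hinj : InjOn γ (Icc a b))
    (hline : ∀ s ∈ Icc a b, ∃ c : ℝ, γ s = p + c • u) (ht : t ∈ Icc a b)
    (hγ' : derivWithin γ (Icc a b) t ≠ 0) :
    ∃ r : ℝ, 0 < r ∧ derivWithin γ (Icc a b) t = r • (γ b - γ a) := by
  have hu : u ≠ 0 := by
    rintro rfl
    obtain ⟨c, hc⟩ := hline a (left_mem_Icc.2 hab.le)
    obtain ⟨c', hc'⟩ := hline b (right_mem_Icc.2 hab.le)
    exact hab.ne (hinj (left_mem_Icc.2 hab.le) (right_mem_Icc.2 hab.le) (by simp [hc, hc']))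
  obtain ⟨φ, hφ⟩ := SeparatingDual.exists_eq_one (R := ℝ) hu
  set lam : ℝ → ℝ := fun s => φ (γ s - p)
  have hγ_eq : ∀ s ∈ Icc a b, γ s = p + lam s • u := by
    intro s hs
    obtain ⟨c, hc⟩ := hline s hs
    simp [lam, hc, hφ]
  set d := derivWithin γ (Icc a b) t
  have hUD := uniqueDiffOn_Icc hab t ht
  have hlam : HasDerivWithinAt lam (φ d) (Icc a b) t :=
    φ.hasFDerivAt.comp_hasDerivWithinAt t ((hγ t ht).hasDerivWithinAt.sub_const p)
  have hd : d = φ d • u :=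
    (((hlam.smul_const u).const_add p).congr_of_mem hγ_eq ht).derivWithin hUD
  have hlam_inj : InjOn lam (Icc a b) := fun s hs s' hs' h =>
    hinj hs hs' (by rw [hγ_eq s hs, hγ_eq s' hs', h])
  have hφd : φ d ≠ 0 := fun h => hγ' (by rw [hd, h, zero_smul])
  have hpos := derivWithin_mul_sub_pos_of_injOn (g := lam) (t := t) hab
    (φ.continuous.comp_continuousOn (hγ.continuousOn.sub continuousOn_const)) hlam_inj
    (hlam.derivWithin hUD ▸ hφd)
  rw [hlam.derivWithin hUD] at hpos
  have hne : lam b - lam a ≠ 0 := right_ne_zero_of_mul hpos.ne'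
  refine ⟨φ d / (lam b - lam a), div_pos_iff.2 (mul_pos_iff.1 hpos), ?_⟩
  rw [hγ_eq b (right_mem_Icc.2 hab.le), hγ_eq a (left_mem_Icc.2 hab.le), add_sub_add_left_eq_sub,
    ← sub_smul, smul_smul, div_mul_cancel₀ _ hne]
  exact hd

theorem add_add_ne_zero_of_mem_span_singleton {E : Type*} [NormedAddCommGroup E]
    [NormedSpace ℝ E] {n τ₁ τ₂ τ₃ : E} (h₁ : ‖τ₁‖ = 1) (h₂ : ‖τ₂‖ = 1) (h₃ : ‖τ₃‖ = 1)
    (hτ₁ : τ₁ ∈ ℝ ∙ n) (hτ₂ : τ₂ ∈ ℝ ∙ n) (hτ₃ : τ₃ ∈ ℝ ∙ n) : τ₁ + τ₂ + τ₃ ≠ 0 := by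
  obtain ⟨c₁, rfl⟩ := Submodule.mem_span_singleton.1 hτ₁
  obtain ⟨c₂, rfl⟩ := Submodule.mem_span_singleton.1 hτ₂
  obtain ⟨c₃, rfl⟩ := Submodule.mem_span_singleton.1 hτ₃
  rw [norm_smul, Real.norm_eq_abs] at h₁ h₂ h₃
  have hn₀ : n ≠ 0 := by rintro rfl; simp at h₁
  have hn : 0 < ‖n‖ := norm_pos_iff.2 hn₀
  rw [← add_smul, ← add_smul, smul_ne_zero_iff_left hn₀]
  have e₂ : |c₂| = |c₁| := mul_right_cancel₀ hn.ne' (h₂.trans h₁.symm)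
  have e₃ : |c₃| = |c₁| := mul_right_cancel₀ hn.ne' (h₃.trans h₁.symm)
  have hc₁ : c₁ ≠ 0 := by rintro rfl; simp at h₁
  -- the sum is an odd multiple of `c₁`
  rcases abs_eq_abs.1 e₂ with h | h <;> rcases abs_eq_abs.1 e₃ with h' | h' <;>
    rw [h, h'] <;> intro h0 <;> apply hc₁ <;> linarith

theorem Module.Dual.exists_ker_le_span_singleton {K V : Type*} [Field K] [AddCommGroup V]
    [Module K V] [FiniteDimensional K V] (hV : finrank K V = 2) {f : Dual K V} (hf : f ≠ 0) :
    ∃ n : V, LinearMap.ker f ≤ K ∙ n := by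
  have := Dual.finrank_ker_add_one_of_ne_zero hf
  obtain ⟨n, hn⟩ := finrank_le_one_iff.1 (by omega : finrank K (LinearMap.ker f) ≤ 1)
  refine ⟨n, fun v hv => Submodule.mem_span_singleton.2 ?_⟩
  obtain ⟨c, hc⟩ := hn ⟨v, hv⟩
  exact ⟨c, congrArg Subtype.val hc⟩

theorem Module.Dual.exists_ne_zero_apply_eq_zero {K V : Type*} [Field K] [AddCommGroup V]
    [Module K V] [FiniteDimensional K V] (hV : 2 ≤ finrank K V) (v : V) :
    ∃ f : Dual K V, f ≠ 0 ∧ f v = 0 := by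
  have hlt : K ∙ v < ⊤ := Submodule.lt_top_of_finrank_lt_finrank
    ((finrank_span_le_card {v}).trans_lt (by simp; omega))
  obtain ⟨f, hf, hfv⟩ := Submodule.exists_dual_map_eq_bot_of_lt_top hlt inferInstance
  exact ⟨f, hf, (Submodule.mem_bot K).1
    (hfv ▸ Submodule.mem_map_of_mem (Submodule.mem_span_singleton_self v))⟩

namespace TopGraph

variable {N : ℕ}

theorem IsVertexPoint.symm {x : unitInterval × Fin N} (hx : IsVertexPoint x) :
    IsVertexPoint (unitInterval.symm x.1, x.2) := by
  rcases hx with h | h <;> simp [IsVertexPoint, h]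

theorem finite_setOf_isVertexPoint : {x : unitInterval × Fin N | IsVertexPoint x}.Finite :=
  ((toFinite {0, 1}).prod finite_univ).subset fun _ hx => ⟨hx, mem_univ _⟩

theorem isVertexPoint_of_mem_fiber_proj (G : TopGraph N) {x y : unitInterval × Fin N}
    (hx : IsVertexPoint x) (hy : y ∈ G.fiber (G.proj x)) : IsVertexPoint y :=
  (G.rel_vertices y x (Quotient.exact hy)).elim (· ▸ hx) (·.1)

theorem isEndpoint_or_isJunction_proj (G : TopGraph N) {x : unitInterval × Fin N}
    (hx : IsVertexPoint x) : G.IsEndpoint (G.proj x) ∨ G.IsJunction (G.proj x) := by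
  have hV := fun y => G.isVertexPoint_of_mem_fiber_proj hx (y := y)
  have hpos : 0 < (G.fiber (G.proj x)).ncard :=
    (ncard_pos (finite_setOf_isVertexPoint.subset hV)).2 ⟨x, rfl⟩
  rcases (Nat.one_le_iff_ne_zero.2 hpos.ne').eq_or_lt with h | h
  · exact Or.inl ⟨hV, h.symm⟩
  · exact Or.inr ⟨hV, h⟩

end TopGraph

namespace Network

variable {N : ℕ} {G : TopGraph N}

theorem norm_innerTangent (Γ : Network N G) (x : unitInterval × Fin N) :
    ‖Γ.innerTangent x‖ = 1 := by
  unfold innerTangent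
  split_ifs
  · exact norm_smul_inv_norm (Γ.edge_immersed _ 0 (left_mem_Icc.2 zero_le_one))
  · rw [norm_neg]
    exact norm_smul_inv_norm (Γ.edge_immersed _ 1 (right_mem_Icc.2 zero_le_one))

theorem IsMinimal.exists_pos_innerTangent_eq_smul {Γ : Network N G} (hmin : Γ.IsMinimal)
    {x : unitInterval × Fin N} (hx : TopGraph.IsVertexPoint x) :
    ∃ r : ℝ, 0 < r ∧ Γ.innerTangent x =
      r • (Γ.toFun (G.proj (unitInterval.symm x.1, x.2)) - Γ.toFun (G.proj x)) := by
  obtain ⟨e, i⟩ := x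
  obtain ⟨p, q, -, hseg⟩ := hmin.straight i
  have hline : ∀ s ∈ Icc (0:ℝ) 1, ∃ c : ℝ, Γ.edge i s = p + c • (q - p) := by
    intro s hs
    have hmem : Γ.edge i s ∈ segment ℝ p q := hseg ▸ mem_image_of_mem _ hs
    rw [segment_eq_image'] at hmem
    obtain ⟨c, -, hc⟩ := hmem
    exact ⟨c, hc.symm⟩
  have hunit : ∀ t ∈ Icc (0:ℝ) 1, ∃ r : ℝ, 0 < r ∧
      ‖derivWithin (Γ.edge i) (Icc 0 1) t‖⁻¹ • derivWithin (Γ.edge i) (Icc 0 1) t =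
        r • (Γ.edge i 1 - Γ.edge i 0) := by
    intro t ht
    have hd₀ := Γ.edge_immersed i t ht
    obtain ⟨r, hr, hd⟩ := exists_pos_derivWithin_eq_smul_sub_of_injOn zero_lt_one
      ((Γ.edge_smooth i).differentiableOn one_ne_zero) (hmin.embed i) hline ht hd₀
    exact ⟨_, mul_pos (inv_pos.2 (norm_pos_iff.2 hd₀)) hr, by rw [hd, smul_smul]⟩
  have h0 := Γ.edge_eq i 0
  have h1 := Γ.edge_eq i 1
  simp only [Set.Icc.coe_zero, Set.Icc.coe_one] at h0 h1
  rcases hx with rfl | rfl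
  · obtain ⟨r, hr, hτ⟩ := hunit 0 (left_mem_Icc.2 zero_le_one)
    exact ⟨r, hr, by simp [innerTangent, hτ, h0, h1]⟩
  · obtain ⟨r, hr, hτ⟩ := hunit 1 (right_mem_Icc.2 zero_le_one)
    exact ⟨r, hr, by simp [innerTangent, hτ, h0, h1, ← smul_neg]⟩

end Network

namespace Network.IsMinimal

variable {N : ℕ} {G : TopGraph N} {Γ : Network N G}

theorem exists_lt_of_isJunction (hmin : Γ.IsMinimal) {f : Dual ℝ Plane} (hf : f ≠ 0)
    {p : G.space} (hp : G.IsJunction p) :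
    ∃ x, TopGraph.IsVertexPoint x ∧ f (Γ.toFun p) < f (Γ.toFun (G.proj x)) := by
  by_contra! hmax
  obtain ⟨y₁, y₂, y₃, h₁₂, h₁₃, h₂₃, hfib⟩ :=
    ncard_eq_three.1 (hmin.junctions_order_three p hp)
  have hsum := hmin.balanced p hp
  rw [hfib, finsum_mem_insert _ (by simp [h₁₂, h₁₃]) (toFinite _),
    finsum_mem_pair h₂₃, ← add_assoc] at hsum
  have hdown : ∀ y ∈ G.fiber p, f (Γ.innerTangent y) ≤ 0 := by
    intro y hy
    obtain ⟨r, hr, hτ⟩ := hmin.exists_pos_innerTangent_eq_smul (hp.1 y hy)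
    rw [hτ, map_smul, map_sub, smul_eq_mul, show G.proj y = p from hy]
    exact mul_nonpos_of_nonneg_of_nonpos hr.le
      (sub_nonpos.2 (hmax _ (hp.1 y hy).symm))
  have hd₁ := hdown y₁ (by simp [hfib])
  have hd₂ := hdown y₂ (by simp [hfib])
  have hd₃ := hdown y₃ (by simp [hfib])
  have hf_sum : f (Γ.innerTangent y₁) + f (Γ.innerTangent y₂) + f (Γ.innerTangent y₃) = 0 := by
    rw [← map_add, ← map_add, hsum, map_zero]
  obtain ⟨n, hn⟩ := Dual.exists_ker_le_span_singleton finrank_euclideanSpace_fin hf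
  exact add_add_ne_zero_of_mem_span_singleton (Γ.norm_innerTangent y₁) (Γ.norm_innerTangent y₂)
    (Γ.norm_innerTangent y₃) (hn (LinearMap.mem_ker.2 (by linarith)))
    (hn (LinearMap.mem_ker.2 (by linarith))) (hn (LinearMap.mem_ker.2 (by linarith))) hsum

theorem exists_isEndpoint_forall_le (hmin : Γ.IsMinimal) {f : Dual ℝ Plane} (hf : f ≠ 0)
    {x₀ : unitInterval × Fin N} (hx₀ : TopGraph.IsVertexPoint x₀) :
    ∃ p, G.IsEndpoint p ∧
      ∀ x, TopGraph.IsVertexPoint x → f (Γ.toFun (G.proj x)) ≤ f (Γ.toFun p) := by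
  obtain ⟨xₘ, hxₘ, hmax⟩ := exists_max_image _ (fun x => f (Γ.toFun (G.proj x)))
    TopGraph.finite_setOf_isVertexPoint ⟨x₀, hx₀⟩
  refine ⟨G.proj xₘ, (G.isEndpoint_or_isJunction_proj hxₘ).resolve_right fun hj => ?_, hmax⟩
  obtain ⟨x, hx, hlt⟩ := hmin.exists_lt_of_isJunction hf hj
  exact (hmax x hx).not_gt hlt

end Network.IsMinimal

/-- There is no minimal network with exactly two endpoints and at least
one junction. -/
theorem no_minimal_network_with_two_endpoints_and_junction {N : ℕ} {G : TopGraph N}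
    (Γ : Network N G) (hmin : Γ.IsMinimal)
    (h2 : {p : G.space | G.IsEndpoint p}.ncard = 2) :
    ¬ ∃ m : G.space, G.IsJunction m := by
  rintro ⟨m, hm⟩
  obtain ⟨a, b, -, hab⟩ := ncard_eq_two.1 h2
  obtain ⟨x₀, rfl⟩ : ∃ x₀, G.proj x₀ = m := Quotient.exists_rep m
  have hx₀ : TopGraph.IsVertexPoint x₀ := hm.1 x₀ rfl
  obtain ⟨f, hf, hfab⟩ := Dual.exists_ne_zero_apply_eq_zero
    finrank_euclideanSpace_fin.ge (Γ.toFun a - Γ.toFun b)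
  have hend : ∀ p, G.IsEndpoint p → f (Γ.toFun p) = f (Γ.toFun a) := by
    intro p hp
    rcases (hab ▸ hp : p ∈ ({a, b} : Set G.space)) with rfl | rfl
    · rfl
    · rw [map_sub, sub_eq_zero] at hfab; exact hfab.symm
  obtain ⟨p, hp, hp_max⟩ := hmin.exists_isEndpoint_forall_le hf hx₀
  obtain ⟨q, hq, hq_min⟩ := hmin.exists_isEndpoint_forall_le (neg_ne_zero.2 hf) hx₀
  obtain ⟨x, hx, hlt⟩ := hmin.exists_lt_of_isJunction hf hm
  have h_le := hp_max x hx
  have h_ge := hq_min x₀ hx₀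
  simp only [LinearMap.neg_apply, neg_le_neg_iff] at h_ge
  linarith [hend p hp, hend q hq]
end
end
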